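/- arXiv:1407.1648 — 2 statements merged into one kernel-verified Lean document; each statement's English description precedes it below -/
import Mathlib

section
/- Let r, s be positive integers, let B_1, B_2, …, B_r be nonnegative real s×s matrices, and let A be an rs×rs nonnegative matrix written as an r×r array of s×s blocks such that in every block row and in every block column each of B_1, B_2, …, B_r appears exactly once. Then the spectral radius of A equals the spectral radius of B_1 + B_2 + ⋯ + B_r. -/
/-!
Let `S = ∑ t, B t`. Since each block row of `A` contains every `B t` once, summing row `(i, a)`
of `A` over the block index of the columns gives row `a` of `S`; this passes to powers, so the
block row sums of `A ^ n` are the entries of `S ^ n`. For nonnegative `A` the absolute row sums of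
`A ^ n` and `S ^ n` therefore agree, hence so do their `ℓ∞` operator norms, and Gelfand's formula
gives equal spectral radii.
-/

/-- The spectral radius of a square real matrix: the maximum (supremum) of the
moduli of its complex eigenvalues. -/
noncomputable def specRad {m : Type*} [Fintype m] [DecidableEq m]
    (M : Matrix m m ℝ) : ℝ :=
  sSup {x : ℝ | ∃ z ∈ spectrum ℂ (M.map (algebraMap ℝ ℂ)), ‖z‖ = x}

/-- The `s × s` block in block-position `(i, j)` of an `rs × rs` matrix. -/
def blockOf (r s : ℕ) (M : Matrix (Fin r × Fin s) (Fin r × Fin s) ℝ)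
    (i j : Fin r) : Matrix (Fin s) (Fin s) ℝ :=
  Matrix.of fun a b => M (i, a) (j, b)

open Finset

attribute [local instance] Matrix.linftyOpNormedAddCommGroup Matrix.linftyOpNormedRing
  Matrix.linftyOpNormedAlgebra

lemma specRad_eq_toReal_spectralRadius {m : Type*} [Fintype m] [DecidableEq m]
    (M : Matrix m m ℝ) :
    specRad M = (spectralRadius ℂ (M.map (algebraMap ℝ ℂ))).toReal := by
  rw [spectralRadius, ← sSup_image, ENNReal.toReal_sSup _ (by simp), Set.image_image]
  simp [specRad, Set.image]

theorem spectrum.spectralRadius_eq_of_nnnorm_pow_eq {A B : Type*} [NormedRing A]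
    [NormedAlgebra ℂ A] [CompleteSpace A] [NormedRing B] [NormedAlgebra ℂ B] [CompleteSpace B] {a : A} {b : B}
    (h : ∀ n : ℕ, ‖a ^ n‖₊ = ‖b ^ n‖₊) : spectralRadius ℂ a = spectralRadius ℂ b := by
  refine tendsto_nhds_unique ?_ (pow_nnnorm_pow_one_div_tendsto_nhds_spectralRadius b)
  simpa only [h] using pow_nnnorm_pow_one_div_tendsto_nhds_spectralRadius a

namespace Matrix

variable {ι κ R : Type*} [Fintype ι] [Fintype κ]

theorem sum_blockRow_pow [DecidableEq ι] [DecidableEq κ] [Semiring R]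
    {A : Matrix (ι × κ) (ι × κ) R} {S : Matrix κ κ R}
    (hAS : ∀ i a b, ∑ j, A (i, a) (j, b) = S a b) (n : ℕ) (i : ι) (a b : κ) :
    ∑ j, (A ^ n) (i, a) (j, b) = (S ^ n) a b := by
  induction n generalizing b with
  | zero => by_cases hab : a = b <;> simp [one_apply, hab]
  | succ n ih =>
    calc ∑ j, (A ^ (n + 1)) (i, a) (j, b)
        = ∑ p : ι × κ, (A ^ n) (i, a) p * ∑ j, A p (j, b) := by
          simp_rw [pow_succ, mul_apply, mul_sum]; exact sum_comm
      _ = ∑ c, (∑ k, (A ^ n) (i, a) (k, c)) * S c b := by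
          simp_rw [hAS, Fintype.sum_prod_type, sum_mul]; exact sum_comm
      _ = (S ^ (n + 1)) a b := by simp_rw [ih, pow_succ, mul_apply]

theorem linfty_opNNNorm_eq_of_blockRowSum [Nonempty ι] {A : Matrix (ι × κ) (ι × κ) ℝ}
    {S : Matrix κ κ ℝ} (hA : ∀ p q, 0 ≤ A p q) (hAS : ∀ i a b, ∑ j, A (i, a) (j, b) = S a b) :
    ‖A‖₊ = ‖S‖₊ := by
  have hrow : ∀ i a, ∑ q, ‖A (i, a) q‖₊ = ∑ b, ‖S a b‖₊ := fun i a => by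
    rw [Fintype.sum_prod_type, sum_comm]
    refine sum_congr rfl fun b _ => ?_
    rw [← hAS i a b, Real.nnnorm_of_nonneg (sum_nonneg fun j _ => hA _ _)]
    ext
    simp [Real.nnnorm_of_nonneg (hA _ _)]
  rw [linfty_opNNNorm_def, linfty_opNNNorm_def, ← univ_product_univ, sup_product_left]
  calc (univ.sup fun i => univ.sup fun a => ∑ q, ‖A (i, a) q‖₊)
      = univ.sup fun _ : ι => univ.sup fun a => ∑ b, ‖S a b‖₊ := by simp only [hrow]
    _ = _ := sup_const univ_nonempty _

theorem linfty_opNNNorm_map_algebraMap (M : Matrix ι κ ℝ) :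
    ‖M.map (algebraMap ℝ ℂ)‖₊ = ‖M‖₊ := by
  simp [linfty_opNNNorm_def]

end Matrix

theorem stmt2_general (r s : ℕ) (hr : 0 < r)
    (B : Fin r → Matrix (Fin s) (Fin s) ℝ)
    (A : Matrix (Fin r × Fin s) (Fin r × Fin s) ℝ)
    (hA : ∀ p q, 0 ≤ A p q)
    -- in every block row and every block column, each of `B 0, …, B (r-1)`
    -- appears exactly once:
    (σ : Fin r → Fin r → Fin r)
    (hblock : ∀ i j, blockOf r s A i j = B (σ i j))
    (hrow : ∀ i, Function.Bijective (σ i)) :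
    specRad A = specRad (∑ t, B t) := by
  have : Nonempty (Fin r) := ⟨⟨0, hr⟩⟩
  have hAS : ∀ i a b, ∑ j, A (i, a) (j, b) = (∑ t, B t) a b := fun i a b => by
    rw [Matrix.sum_apply]
    exact Fintype.sum_bijective (σ i) (hrow i) _ _ fun j => congrFun₂ (hblock i j) a b
  rw [specRad_eq_toReal_spectralRadius, specRad_eq_toReal_spectralRadius]
  refine congrArg _ (spectrum.spectralRadius_eq_of_nnnorm_pow_eq fun n => ?_)
  rw [← Matrix.map_pow, ← Matrix.map_pow, Matrix.linfty_opNNNorm_map_algebraMap,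
    Matrix.linfty_opNNNorm_map_algebraMap]
  exact Matrix.linfty_opNNNorm_eq_of_blockRowSum (Matrix.pow_apply_nonneg hA n)
    (Matrix.sum_blockRow_pow hAS n)

theorem stmt2 (r s : ℕ) (hr : 0 < r) (hs : 0 < s)
    (B : Fin r → Matrix (Fin s) (Fin s) ℝ)
    (hB : ∀ t a b, 0 ≤ B t a b)
    (A : Matrix (Fin r × Fin s) (Fin r × Fin s) ℝ)
    (hA : ∀ p q, 0 ≤ A p q)
    -- in every block row and every block column, each of `B 0, …, B (r-1)`
    -- appears exactly once:
    (σ : Fin r → Fin r → Fin r)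
    (hblock : ∀ i j, blockOf r s A i j = B (σ i j))
    (hrow : ∀ i, Function.Bijective (σ i))
    (hcol : ∀ j, Function.Bijective fun i => σ i j) :
    specRad A = specRad (∑ t, B t) :=
  stmt2_general r s hr B A hA σ hblock hrow
end

section
/- For every integer n ≥ 3, the polynomial Q_n(x) = x^n − 2(n−1)·Σ_{j=1}^{n−1} x^j + 1 has exactly one real root in the open interval (0, 1). -/
open Polynomial in
/-- The polynomial `Q_n(x) = x^n − 2(n−1)·Σ_{j=1}^{n−1} x^j + 1`. -/
noncomputable def Qpoly (n : ℕ) : Polynomial ℝ :=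
  X ^ n - C (2 * ((n : ℝ) - 1)) * (∑ j ∈ Finset.Icc 1 (n - 1), X ^ j) + 1

lemma Qpoly_eval (n : ℕ) (x : ℝ) :
    (Qpoly n).eval x
      = x ^ n - 2 * ((n : ℝ) - 1) * (∑ j ∈ Finset.Icc 1 (n - 1), x ^ j) + 1 := by
  simp [Qpoly, Polynomial.eval_finset_sum]

lemma Qpoly_anti (n : ℕ) (hn : 3 ≤ n) :
    StrictAntiOn (fun x : ℝ => (Qpoly n).eval x) (Set.Icc 0 1) := by
  intro x hx y hy hxy
  simp only [Qpoly_eval]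
  have hx0 : (0:ℝ) ≤ x := hx.1
  have hy1 : y ≤ 1 := hy.2
  have hy0 : (0:ℝ) ≤ y := le_trans hx0 hxy.le
  have hx1 : x ≤ 1 := le_trans hxy.le hy1
  have hn3 : (3:ℝ) ≤ (n:ℝ) := by exact_mod_cast hn
  -- key1 : y^n - x^n ≤ n * (y - x)
  have key1 : y ^ n - x ^ n ≤ (n:ℝ) * (y - x) := by
    have hgeom := geom_sum₂_mul y x n
    rw [← hgeom]
    have hsum : (∑ i ∈ Finset.range n, y ^ i * x ^ (n - 1 - i)) ≤ (n:ℝ) := by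
      calc (∑ i ∈ Finset.range n, y ^ i * x ^ (n - 1 - i))
          ≤ ∑ i ∈ Finset.range n, (1:ℝ) := by
            apply Finset.sum_le_sum
            intro i _
            exact mul_le_one₀ (pow_le_one₀ hy0 hy1) (pow_nonneg hx0 _)
              (pow_le_one₀ hx0 hx1)
        _ = (n:ℝ) := by simp
    exact mul_le_mul_of_nonneg_right hsum (sub_nonneg.mpr hxy.le)
  -- key2 : y - x ≤ ∑ (y^j - x^j)
  have key2 : y - x ≤ ∑ j ∈ Finset.Icc 1 (n - 1), (y ^ j - x ^ j) := by
    have h1 : 1 ∈ Finset.Icc 1 (n - 1) := by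
      simp [Finset.mem_Icc]
      omega
    have := Finset.single_le_sum (f := fun j => y ^ j - x ^ j)
      (fun j _ => sub_nonneg.mpr (pow_le_pow_left₀ hx0 hxy.le j)) h1
    simpa using this
  have hsub : (∑ j ∈ Finset.Icc 1 (n - 1), y ^ j) - (∑ j ∈ Finset.Icc 1 (n - 1), x ^ j)
      = ∑ j ∈ Finset.Icc 1 (n - 1), (y ^ j - x ^ j) := by
    rw [Finset.sum_sub_distrib]
  have hpos : (0:ℝ) < y - x := sub_pos.mpr hxy
  nlinarith [key1, key2, hsub, hpos, hn3]

theorem stmt17 (n : ℕ) (hn : 3 ≤ n) :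
    ∃! x : ℝ, x ∈ Set.Ioo (0 : ℝ) 1 ∧ (Qpoly n).eval x = 0 := by
  set f : ℝ → ℝ := fun x => (Qpoly n).eval x with hf
  have hn3 : (3:ℝ) ≤ (n:ℝ) := by exact_mod_cast hn
  have hf0 : f 0 = 1 := by
    simp only [hf, Qpoly_eval]
    have : (∑ j ∈ Finset.Icc 1 (n - 1), (0:ℝ) ^ j) = 0 := by
      apply Finset.sum_eq_zero
      intro j hj
      have : 1 ≤ j := (Finset.mem_Icc.mp hj).1
      exact zero_pow (by omega)
    rw [this, zero_pow (by omega)]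
    ring
  have hf1 : f 1 < 0 := by
    simp only [hf, Qpoly_eval]
    have hcard : (∑ j ∈ Finset.Icc 1 (n - 1), (1:ℝ) ^ j) = (n:ℝ) - 1 := by
      simp only [one_pow, Finset.sum_const, Nat.card_Icc, smul_eq_mul, mul_one]
      have : n - 1 + 1 - 1 = n - 1 := by omega
      rw [this, nsmul_eq_mul, mul_one, Nat.cast_sub (by omega : 1 ≤ n), Nat.cast_one]
    rw [hcard, one_pow]
    nlinarith
  have hanti := Qpoly_anti n hn
  have hcont : ContinuousOn f (Set.Icc 0 1) := ((Qpoly n).continuous).continuousOn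
  have hmem : (0:ℝ) ∈ Set.Ioo (f 1) (f 0) := by
    constructor
    · exact hf1
    · rw [hf0]; norm_num
  have hsub := intermediate_value_Ioo' (by norm_num : (0:ℝ) ≤ 1) hcont
  obtain ⟨x, hxmem, hxval⟩ := hsub hmem
  refine ⟨x, ⟨hxmem, hxval⟩, ?_⟩
  rintro y ⟨hymem, hyval⟩
  have hx' : x ∈ Set.Icc (0:ℝ) 1 := Set.Ioo_subset_Icc_self hxmem
  have hy' : y ∈ Set.Icc (0:ℝ) 1 := Set.Ioo_subset_Icc_self hymem
  exact hanti.injOn hy' hx' (hyval.trans hxval.symm)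
end
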